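/- Normalization identity: π^0 S = 1 as a scalar, where S is the column vector S = 1 + Σ_{m=1}^{M} (R_1 R_2 ⋯ R_m) 1. -/
import Mathlib


open Matrix

private lemma sum_ite_val' {N : ℕ} (f : Fin N → ℝ) (k : ℕ) :
    ∑ n, (if n.val = k then f n else 0) = if h : k < N then f ⟨k, h⟩ else 0 := by
  split
  · next h =>
    rw [show (∑ n, (if n.val = k then f n else 0)) = ∑ n, (if n = ⟨k,h⟩ then f n else 0) from
      Finset.sum_congr rfl (fun n _ => if_congr (by rw [Fin.ext_iff]) rfl rfl)]
    exact Fintype.sum_ite_eq' _ f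
  · next h =>
    exact Finset.sum_eq_zero fun n _ => if_neg (by omega)

theorem stmt_6
    (M l : ℕ) (hM : 1 ≤ M)
    (Q : Matrix (Fin (M+1) × Fin (l+1)) (Fin (M+1) × Fin (l+1)) ℝ)
    (htri : ∀ (m n : Fin (M+1)) (i j : Fin (l+1)),
      1 < |(m.val : ℤ) - (n.val : ℤ)| → Q (m, i) (n, j) = 0)
    (hrow : ∀ s, ∑ t, Q s t = 0)
    (W U D : ℕ → Matrix (Fin (l+1)) (Fin (l+1)) ℝ)
    (hW : ∀ (m : ℕ) (hm : m ≤ M) (i j : Fin (l+1)),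
      W m i j = Q (⟨m, by omega⟩, i) (⟨m, by omega⟩, j))
    (hU : ∀ (m : ℕ) (hm : m < M) (i j : Fin (l+1)),
      U m i j = Q (⟨m, by omega⟩, i) (⟨m+1, by omega⟩, j))
    (hD : ∀ (m : ℕ) (hm1 : 1 ≤ m) (hm2 : m ≤ M) (i j : Fin (l+1)),
      D m i j = Q (⟨m, by omega⟩, i) (⟨m-1, by omega⟩, j))
    (hDES : ∀ (m : ℕ), 1 ≤ m → m ≤ M → ∀ (i j : Fin (l+1)), j ≠ 0 → D m i j = 0)
    (Ut : ℕ → Matrix (Fin (l+1)) (Fin (l+1)) ℝ)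
    (hUt : ∀ (m : ℕ), m < M → ∀ (i j : Fin (l+1)),
      Ut m i j = if j = 0 then ∑ k, U m i k else 0)
    (hUtM : Ut M = 0)
    (B : ℕ → Matrix (Fin (l+1)) (Fin (l+1)) ℝ)
    (hB : ∀ (m : ℕ), m ≤ M → B m = W m + Ut m)
    (π : Fin (M+1) × Fin (l+1) → ℝ)
    (hπ : Matrix.vecMul π Q = 0)
    (hBinv : ∀ (m : ℕ), 1 ≤ m → m ≤ M → IsUnit (B m))
    (R : ℕ → Matrix (Fin (l+1)) (Fin (l+1)) ℝ)
    (hR : ∀ (m : ℕ), 1 ≤ m → m ≤ M → R m = -(U (m-1) * (B m)⁻¹))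
    (S : Fin (l+1) → ℝ)
    (hS : ∀ i, S i = 1 + ∑ m ∈ Finset.Icc 1 M, ∑ j, (((List.range' 1 m).map R).prod) i j)
    (hnorm : ∑ s, π s = 1) :
    ∑ i, π ((0 : Fin (M+1)), i) * S i = 1 := by
  -- the level-m slice of π
  set p : ℕ → Fin (l+1) → ℝ :=
    fun m i => if h : m ≤ M then π (⟨m, by omega⟩, i) else 0 with hp
  have hpdef : ∀ (m : ℕ) (hm : m ≤ M) (i : Fin (l+1)), p m i = π (⟨m, by omega⟩, i) := by
    intro m hm i; simp [hp, hm]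
  -- balance equations per target state
  have hbal : ∀ (s : Fin (M+1) × Fin (l+1)), ∑ t, π t * Q t s = 0 := by
    intro s
    have := congrFun hπ s
    simpa [Matrix.vecMul, dotProduct] using this
  -- level-split balance (for 1 ≤ m ≤ M)
  have bal : ∀ (m : ℕ), 1 ≤ m → m ≤ M → ∀ (j : Fin (l+1)),
      (∑ i, p (m-1) i * U (m-1) i j) + (∑ i, p m i * W m i j)
        + (if h : m < M then ∑ i, p (m+1) i * D (m+1) i j else 0) = 0 := by
    intro m h1 h2 j
    have h0 := hbal (⟨m, by omega⟩, j)
    rw [Fintype.sum_prod_type] at h0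
    set f : Fin (M+1) → ℝ :=
      fun n => ∑ i, π (n, i) * Q (n, i) (⟨m, by omega⟩, j) with hf
    have hsplit : ∀ n : Fin (M+1), f n =
        (if n.val = m-1 then f n else 0) + (if n.val = m then f n else 0)
          + (if n.val = m+1 then f n else 0) := by
      intro n
      by_cases e1 : n.val = m-1
      · rw [if_pos e1, if_neg (by omega), if_neg (by omega)]; ring
      · by_cases e2 : n.val = m
        · rw [if_neg e1, if_pos e2, if_neg (by omega)]; ring
        · by_cases e3 : n.val = m+1
          · rw [if_neg e1, if_neg e2, if_pos e3]; ring
          · rw [if_neg e1, if_neg e2, if_neg e3]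
            simp only [add_zero, zero_add]
            refine Finset.sum_eq_zero fun i _ => ?_
            rw [htri n ⟨m, by omega⟩ i j (by simp only [lt_abs, Fin.val_mk]; omega), mul_zero]
    rw [Finset.sum_congr rfl (fun n _ => hsplit n), Finset.sum_add_distrib,
      Finset.sum_add_distrib, sum_ite_val', sum_ite_val', sum_ite_val',
      dif_pos (show m-1 < M+1 by omega), dif_pos (show m < M+1 by omega)] at h0
    have e1 : (∑ i, p (m-1) i * U (m-1) i j) = f ⟨m-1, by omega⟩ := by
      refine Finset.sum_congr rfl fun i _ => ?_
      rw [hpdef (m-1) (by omega), hU (m-1) (by omega)]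
      simp only [Nat.sub_add_cancel h1]
    have e2 : (∑ i, p m i * W m i j) = f ⟨m, by omega⟩ := by
      refine Finset.sum_congr rfl fun i _ => ?_
      rw [hpdef m h2, hW m h2]
    have e3 : (if h : m < M then ∑ i, p (m+1) i * D (m+1) i j else 0)
        = (if h : m+1 < M+1 then f ⟨m+1, h⟩ else 0) := by
      by_cases hlt : m < M
      · rw [dif_pos hlt, dif_pos (by omega)]
        refine Finset.sum_congr rfl fun i _ => ?_
        rw [hpdef (m+1) (by omega), hD (m+1) (by omega) (by omega)]
        simp only [Nat.add_sub_cancel]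
      · rw [dif_neg hlt, dif_neg (by omega)]
    rw [e1, e2, e3]
    exact h0
  -- row sums per block row (for 1 ≤ m ≤ M)
  have rowsum : ∀ (m : ℕ), 1 ≤ m → m ≤ M → ∀ (i : Fin (l+1)),
      (∑ j, W m i j) + (if m < M then ∑ j, U m i j else 0) + D m i 0 = 0 := by
    intro m h1 h2 i
    have h0 := hrow (⟨m, by omega⟩, i)
    rw [Fintype.sum_prod_type] at h0
    set g : Fin (M+1) → ℝ :=
      fun n => ∑ j, Q (⟨m, by omega⟩, i) (n, j) with hg
    have hsplit : ∀ n : Fin (M+1), g n =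
        (if n.val = m-1 then g n else 0) + (if n.val = m then g n else 0)
          + (if n.val = m+1 then g n else 0) := by
      intro n
      by_cases e1 : n.val = m-1
      · rw [if_pos e1, if_neg (by omega), if_neg (by omega)]; ring
      · by_cases e2 : n.val = m
        · rw [if_neg e1, if_pos e2, if_neg (by omega)]; ring
        · by_cases e3 : n.val = m+1
          · rw [if_neg e1, if_neg e2, if_pos e3]; ring
          · rw [if_neg e1, if_neg e2, if_neg e3]
            simp only [add_zero, zero_add]
            refine Finset.sum_eq_zero fun j _ => ?_
            exact htri ⟨m, by omega⟩ n i j (by simp only [lt_abs, Fin.val_mk]; omega)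
    rw [Finset.sum_congr rfl (fun n _ => hsplit n), Finset.sum_add_distrib,
      Finset.sum_add_distrib, sum_ite_val', sum_ite_val', sum_ite_val',
      dif_pos (show m-1 < M+1 by omega), dif_pos (show m < M+1 by omega)] at h0
    have e1 : g ⟨m-1, by omega⟩ = D m i 0 := by
      have : g ⟨m-1, by omega⟩ = ∑ j, D m i j := by
        refine Finset.sum_congr rfl fun j _ => ?_
        rw [hD m h1 h2]
      rw [this]
      exact Finset.sum_eq_single_of_mem 0 (Finset.mem_univ 0)
        (fun j _ hj => hDES m h1 h2 i j hj)
    have e2 : g ⟨m, by omega⟩ = ∑ j, W m i j := by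
      refine Finset.sum_congr rfl fun j _ => ?_
      rw [hW m h2]
    have e3 : (if h : m+1 < M+1 then g ⟨m+1, h⟩ else 0)
        = (if m < M then ∑ j, U m i j else 0) := by
      by_cases hlt : m < M
      · rw [dif_pos (by omega), if_pos hlt]
        refine Finset.sum_congr rfl fun j _ => ?_
        rw [hU m hlt]
      · rw [dif_neg (by omega), if_neg hlt]
    rw [e1, e2, e3] at h0
    linarith
  -- cut (flow balance across levels): for m < M
  have cut : ∀ (m : ℕ), m < M →
      (∑ i, p m i * (∑ k, U m i k)) = ∑ i, p (m+1) i * D (m+1) i 0 := by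
    have hDrow : ∀ (m : ℕ), 1 ≤ m → m ≤ M → ∀ i, (∑ j, D m i j) = D m i 0 :=
      fun m h1 h2 i => Finset.sum_eq_single_of_mem 0 (Finset.mem_univ 0)
        (fun j _ hj => hDES m h1 h2 i j hj)
    have key : ∀ (m : ℕ), 1 ≤ m → m ≤ M →
        (∑ i, p (m-1) i * (∑ k, U (m-1) i k)) - (∑ i, p m i * D m i 0)
          = (if m < M then
              (∑ i, p m i * (∑ k, U m i k)) - (∑ i, p (m+1) i * D (m+1) i 0)
            else 0) := by
      intro m h1 h2
      have hsum := Finset.sum_eq_zero (fun j (_ : j ∈ Finset.univ) => bal m h1 h2 j)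
      rw [Finset.sum_add_distrib, Finset.sum_add_distrib] at hsum
      have P1 : (∑ j, ∑ i, p (m-1) i * U (m-1) i j)
          = ∑ i, p (m-1) i * (∑ k, U (m-1) i k) := by
        rw [Finset.sum_comm]
        exact Finset.sum_congr rfl fun i _ => (Finset.mul_sum _ _ _).symm
      have P2 : (∑ j, ∑ i, p m i * W m i j)
          = ∑ i, p m i * (∑ j, W m i j) := by
        rw [Finset.sum_comm]
        exact Finset.sum_congr rfl fun i _ => (Finset.mul_sum _ _ _).symm
      have eW : (∑ i, p m i * (∑ j, W m i j))
          = -(if m < M then ∑ i, p m i * (∑ k, U m i k) else 0)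
            - (∑ i, p m i * D m i 0) := by
        by_cases hlt : m < M
        · rw [if_pos hlt]
          have : ∀ i, (∑ j, W m i j) = -(∑ j, U m i j) - D m i 0 := by
            intro i; have := rowsum m h1 h2 i; rw [if_pos hlt] at this; linarith
          rw [Finset.sum_congr rfl (fun i _ => by rw [this i])]
          simp [mul_sub, mul_neg, Finset.sum_sub_distrib]
        · rw [if_neg hlt]
          have : ∀ i, (∑ j, W m i j) = - D m i 0 := by
            intro i; have := rowsum m h1 h2 i; rw [if_neg hlt] at this; linarith
          rw [Finset.sum_congr rfl (fun i _ => by rw [this i])]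
          simp [mul_neg]
      by_cases hlt : m < M
      · simp only [dif_pos hlt] at hsum
        have P3 : (∑ j, ∑ i, p (m+1) i * D (m+1) i j)
            = ∑ i, p (m+1) i * D (m+1) i 0 := by
          rw [Finset.sum_comm]
          refine Finset.sum_congr rfl fun i _ => ?_
          rw [← Finset.mul_sum, hDrow (m+1) (by omega) (by omega) i]
        rw [P1, P2, P3, eW, if_pos hlt] at hsum
        rw [if_pos hlt]
        linarith
      · simp only [dif_neg hlt] at hsum
        rw [P1, P2, eW, if_neg hlt] at hsum
        rw [if_neg hlt]
        simp only [Finset.sum_const_zero, add_zero] at hsum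
        linarith
    suffices h : ∀ (d m : ℕ), m < M → M - 1 - m = d →
        (∑ i, p m i * (∑ k, U m i k)) = ∑ i, p (m+1) i * D (m+1) i 0 by
      intro m hm; exact h (M-1-m) m hm rfl
    intro d
    induction d with
    | zero =>
      intro m hm hd
      have hm' : m = M - 1 := by omega
      subst hm'
      have := key M hM le_rfl
      rw [if_neg (lt_irrefl M)] at this
      rw [show M - 1 + 1 = M from by omega]
      linarith
    | succ d ih =>
      intro m hm hd
      have h1 : m + 1 < M := by omega
      have := key (m+1) (by omega) (by omega)
      rw [if_pos h1, Nat.add_sub_cancel] at this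
      have := ih (m+1) h1 (by omega)
      linarith [key (m+1) (by omega) (le_of_lt h1)]
  -- the key recursion: π^m B^m = - π^{m-1} U^{m-1}
  have hstep : ∀ (m : ℕ), 1 ≤ m → m ≤ M →
      Matrix.vecMul (p m) (B m) = - Matrix.vecMul (p (m-1)) (U (m-1)) := by
    intro m h1 h2
    funext j
    have hUtterm : (∑ i, p m i * Ut m i j)
        = (if h : m < M then ∑ i, p (m+1) i * D (m+1) i j else 0) := by
      by_cases hlt : m < M
      · rw [dif_pos hlt]
        simp_rw [hUt m hlt]
        by_cases hj : j = 0
        · subst hj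
          simp only [if_pos rfl]
          exact cut m hlt
        · simp only [if_neg hj, mul_zero, Finset.sum_const_zero]
          symm
          exact Finset.sum_eq_zero fun i _ => by
            rw [hDES (m+1) (by omega) (by omega) i j hj, mul_zero]
      · rw [dif_neg hlt]
        have hm : m = M := by omega
        subst hm
        simp [hUtM]
    have hb := bal m h1 h2 j
    rw [hUtterm.symm] at hb
    show (∑ i, p m i * B m i j) = -(∑ i, p (m-1) i * U (m-1) i j)
    rw [hB m h2]
    simp only [Matrix.add_apply, mul_add, Finset.sum_add_distrib]
    linarith
  have hRrel : ∀ (m : ℕ), 1 ≤ m → m ≤ M →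
      p m = Matrix.vecMul (p (m-1)) (R m) := by
    intro m h1 h2
    have hu := (Matrix.isUnit_iff_isUnit_det (B m)).mp (hBinv m h1 h2)
    have : Matrix.vecMul (p m) (B m * (B m)⁻¹)
        = Matrix.vecMul (- Matrix.vecMul (p (m-1)) (U (m-1))) (B m)⁻¹ := by
      rw [← Matrix.vecMul_vecMul, hstep m h1 h2]
    rw [Matrix.mul_nonsing_inv _ hu, Matrix.vecMul_one] at this
    rw [this, hR m h1 h2, Matrix.vecMul_neg, ← Matrix.vecMul_vecMul, Matrix.neg_vecMul]
  -- products
  have hprod : ∀ (m : ℕ), m ≤ M →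
      Matrix.vecMul (p 0) (((List.range' 1 m).map R).prod) = p m := by
    intro m
    induction m with
    | zero => intro _; simp
    | succ k ih =>
      intro hk
      have hk' : k ≤ M := by omega
      rw [List.range'_concat, List.map_append, List.prod_append,
        ← Matrix.vecMul_vecMul]
      simp only [List.map_cons, List.map_nil, List.prod_cons, List.prod_nil, mul_one]
      rw [ih hk']
      have := hRrel (k+1) (by omega) hk
      simpa [Nat.add_comm] using this.symm
  -- final computation
  have h0i : ∀ i, π ((0 : Fin (M+1)), i) = p 0 i := by
    intro i
    rw [hpdef 0 (by omega) i]
    congr 1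
  have hmain : ∀ m ∈ Finset.Icc 1 M,
      (∑ i, ∑ j, p 0 i * ((List.map R (List.range' 1 m)).prod) i j) = ∑ j, p m j := by
    intro m hm
    rw [Finset.sum_comm]
    refine Finset.sum_congr rfl fun j _ => ?_
    have := congrFun (hprod m (Finset.mem_Icc.mp hm).2) j
    simpa [Matrix.vecMul, dotProduct] using this
  have e : ∀ n : Fin (M+1), (∑ i, π (n, i)) = ∑ i, p n.val i := by
    intro n
    refine Finset.sum_congr rfl fun i _ => ?_
    rw [hpdef n.val (by omega) i]
  have hone : (∑ i, p 0 i) + ∑ m ∈ Finset.Icc 1 M, (∑ i, p m i) = 1 := by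
    rw [← hnorm, Fintype.sum_prod_type]
    rw [Finset.sum_congr rfl (fun n _ => e n),
      Fin.sum_univ_eq_sum_range (fun m => ∑ i, p m i) (M+1),
      Finset.range_eq_Ico, Finset.sum_eq_sum_Ico_succ_bot (by omega),
      Finset.Ico_add_one_right_eq_Icc]
  calc ∑ i, π ((0 : Fin (M+1)), i) * S i
      = ∑ i, (p 0 i + ∑ m ∈ Finset.Icc 1 M,
          ∑ j, p 0 i * ((List.map R (List.range' 1 m)).prod) i j) := by
        refine Finset.sum_congr rfl fun i _ => ?_
        rw [h0i i, hS i, mul_add, mul_one, Finset.mul_sum]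
        congr 1
        exact Finset.sum_congr rfl fun m _ => Finset.mul_sum _ _ _
    _ = (∑ i, p 0 i) + ∑ m ∈ Finset.Icc 1 M, ∑ j, p m j := by
        rw [Finset.sum_add_distrib]
        congr 1
        rw [Finset.sum_comm]
        exact Finset.sum_congr rfl hmain
    _ = 1 := hone
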